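/- arXiv:2604.15525 — 2 statements merged into one kernel-verified Lean document; each statement's English description precedes it below -/
import Mathlib

section
/- Let f : ℝⁿ → ℝ be continuously differentiable with L₁-Lipschitz gradient, and let f_η be its Gaussian smoothing with parameter η > 0. Then ‖∇f_η(x) - ∇f(x)‖ ≤ L₁ η √n for all x ∈ ℝⁿ. -/
open MeasureTheory

/-- The density of the standard Gaussian `𝒩(0, I)` on `ℝⁿ`. -/
noncomputable def stdGaussPdf (n : ℕ) (z : EuclideanSpace ℝ (Fin n)) : ℝ :=
  (2 * Real.pi) ^ (-(n : ℝ) / 2) * Real.exp (-‖z‖ ^ 2 / 2)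

open Real


noncomputable def gphi (t : ℝ) : ℝ := (2 * π) ^ (-(1:ℝ) / 2) * Real.exp (-t ^ 2 / 2)

lemma gphi_nonneg (t : ℝ) : 0 ≤ gphi t := by unfold gphi; positivity

lemma gphi_eq : gphi = fun t => (2 * π) ^ (-(1:ℝ) / 2) * Real.exp (-(1/2) * t ^ 2) := by
  funext t; unfold gphi; ring_nf

lemma integrable_gphi : Integrable gphi := by
  rw [gphi_eq]
  exact (integrable_exp_neg_mul_sq (by norm_num : (0:ℝ) < 1/2)).const_mul _

lemma integral_gphi : ∫ t, gphi t = 1 := by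
  rw [gphi_eq, integral_const_mul, integral_gaussian,
    show π / (1/2) = 2 * π by ring, Real.sqrt_eq_rpow, ← Real.rpow_add (by positivity)]
  norm_num

lemma integrable_sq_gphi : Integrable (fun t => t ^ 2 * gphi t) := by
  rw [gphi_eq]
  have h := (integrable_rpow_mul_exp_neg_mul_sq (by norm_num : (0:ℝ) < 1/2)
    (by norm_num : (-1:ℝ) < 2)).const_mul ((2 * π) ^ (-(1:ℝ) / 2))
  refine h.congr ?_
  filter_upwards with t
  rw [show ((2:ℝ)) = ((2:ℕ):ℝ) by norm_num, Real.rpow_natCast]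
  ring

lemma integral_sq_gphi : ∫ t, t ^ 2 * gphi t = 1 := by
  have h2 : ∫ t : ℝ, t ^ 2 * Real.exp (-(1/2) * t ^ 2) = (2*π) ^ ((1:ℝ)/2) := by
    have heven : ∀ t : ℝ, t ^ 2 * Real.exp (-(1/2) * t ^ 2)
        = (fun s => s ^ (2:ℝ) * Real.exp (-(1/2) * s ^ (2:ℝ))) |t| := by
      intro t
      simp only [show ((2:ℝ)) = ((2:ℕ):ℝ) by norm_num, Real.rpow_natCast]
      rw [sq_abs]
    calc ∫ t : ℝ, t ^ 2 * Real.exp (-(1/2) * t ^ 2)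
        = ∫ t : ℝ, (fun s => s ^ (2:ℝ) * Real.exp (-(1/2) * s ^ (2:ℝ))) |t| := by
          simp_rw [heven]
      _ = 2 * ∫ t in Set.Ioi (0:ℝ), t ^ (2:ℝ) * Real.exp (-(1/2) * t ^ (2:ℝ)) :=
          integral_comp_abs (f := fun s => s ^ (2:ℝ) * Real.exp (-(1/2) * s ^ (2:ℝ)))
      _ = (2*π) ^ ((1:ℝ)/2) := by
          rw [integral_rpow_mul_exp_neg_mul_rpow (by norm_num) (by norm_num) (by norm_num)]
          have h1 : ((1:ℝ)/2) ^ (-((2:ℝ)+1)/2) = 2 ^ ((3:ℝ)/2) := by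
            rw [one_div, Real.inv_rpow (by norm_num), ← Real.rpow_neg (by norm_num)]
            norm_num
          have h3 : Real.Gamma (((2:ℝ)+1)/2) = (1/2) * √π := by
            rw [show ((2:ℝ)+1)/2 = 1/2 + 1 by norm_num, Real.Gamma_add_one (by norm_num),
              Real.Gamma_one_half_eq]
          rw [h1, h3, Real.mul_rpow (by norm_num) pi_nonneg, Real.sqrt_eq_rpow,
            show (3:ℝ)/2 = 1/2 + 1 by norm_num, Real.rpow_add two_pos, Real.rpow_one]
          ring
  rw [gphi_eq]
  have : ∀ t : ℝ, t ^ 2 * ((2 * π) ^ (-(1:ℝ) / 2) * Real.exp (-(1/2) * t ^ 2))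
      = (2 * π) ^ (-(1:ℝ) / 2) * (t ^ 2 * Real.exp (-(1/2) * t ^ 2)) := fun t => by ring
  simp_rw [this]
  rw [integral_const_mul, h2, ← Real.rpow_add (by positivity)]
  norm_num

lemma normsq (n : ℕ) (z : EuclideanSpace ℝ (Fin n)) : ‖z‖ ^ 2 = ∑ i, (z i) ^ 2 := by
  rw [EuclideanSpace.norm_eq, Real.sq_sqrt (by positivity)]
  simp [sq_abs]

lemma pdf_factor (n : ℕ) (z : EuclideanSpace ℝ (Fin n)) :
    stdGaussPdf n z = ∏ i, gphi (z i) := by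
  unfold stdGaussPdf gphi
  rw [normsq, Finset.prod_mul_distrib, Finset.prod_const, ← Real.exp_sum]
  congr 1
  · rw [← Real.rpow_natCast ((2*π) ^ (-(1:ℝ)/2)) _, ← Real.rpow_mul (by positivity)]
    norm_num
    congr 1; ring
  · congr 1
    simp [neg_div, Finset.sum_div]

lemma stdGaussPdf_nonneg (n : ℕ) (z : EuclideanSpace ℝ (Fin n)) : 0 ≤ stdGaussPdf n z := by
  unfold stdGaussPdf; positivity

lemma stdGaussPdf_continuous (n : ℕ) : Continuous (stdGaussPdf n) := by
  unfold stdGaussPdf; fun_prop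

section transfer
variable (n : ℕ)

local notation "e" => MeasurableEquiv.symm (MeasurableEquiv.toLp 2 (Fin n → ℝ))

lemma mp_symm : MeasurePreserving (⇑(e).symm) volume volume :=
  (EuclideanSpace.volume_preserving_symm_measurableEquiv_toLp (Fin n)).symm

lemma integrable_stdGaussPdf : Integrable (stdGaussPdf n) := by
  rw [← (mp_symm n).integrable_comp_emb (MeasurableEquiv.measurableEmbedding _)]
  have : stdGaussPdf n ∘ ⇑(e).symm = fun y : Fin n → ℝ => ∏ i, gphi (y i) :=
    funext fun y => pdf_factor n _
  rw [this]
  exact Integrable.fintype_prod (f := fun (_ : Fin n) => gphi) (fun _ => integrable_gphi)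

lemma integral_stdGaussPdf : ∫ z, stdGaussPdf n z = 1 := by
  rw [← (mp_symm n).integral_comp (MeasurableEquiv.measurableEmbedding _) (stdGaussPdf n)]
  have : ∀ y : Fin n → ℝ, stdGaussPdf n ((e).symm y) = ∏ i, gphi (y i) :=
    fun y => pdf_factor n _
  simp_rw [this, MeasureTheory.integral_fintype_prod_volume_eq_prod (f := fun (_ : Fin n) => gphi),
    integral_gphi, Finset.prod_const_one]

noncomputable def fam (i j : Fin n) : ℝ → ℝ :=
  if j = i then (fun t => t ^ 2 * gphi t) else gphi

lemma fam_integrable (i j : Fin n) : Integrable (fam n i j) := by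
  unfold fam; split
  · exact integrable_sq_gphi
  · exact integrable_gphi

lemma fam_integral (i j : Fin n) : ∫ t, fam n i j t = 1 := by
  unfold fam; split
  · exact integral_sq_gphi
  · exact integral_gphi

lemma key_fam (i : Fin n) (y : Fin n → ℝ) :
    (y i) ^ 2 * ∏ j, gphi (y j) = ∏ j, fam n i j (y j) := by
  rw [← Finset.mul_prod_erase Finset.univ (fun j => fam n i j (y j)) (Finset.mem_univ i),
    ← Finset.mul_prod_erase Finset.univ (fun j => gphi (y j)) (Finset.mem_univ i)]
  have h2 : ∏ j ∈ Finset.univ.erase i, fam n i j (y j)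
      = ∏ j ∈ Finset.univ.erase i, gphi (y j) :=
    Finset.prod_congr rfl (fun j hj => by
      unfold fam; rw [if_neg (Finset.ne_of_mem_erase hj)])
  rw [h2]
  unfold fam
  rw [if_pos rfl]
  ring

lemma pdf_sq_transfer (y : Fin n → ℝ) :
    ‖((e).symm y : EuclideanSpace ℝ (Fin n))‖ ^ 2 * stdGaussPdf n ((e).symm y)
      = ∑ i, ∏ j, fam n i j (y j) := by
  rw [normsq, pdf_factor, Finset.sum_mul]
  exact Finset.sum_congr rfl fun i _ => key_fam n i y

lemma integrable_normsq_pdf :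
    Integrable (fun z : EuclideanSpace ℝ (Fin n) => ‖z‖ ^ 2 * stdGaussPdf n z) := by
  rw [← (mp_symm n).integrable_comp_emb (MeasurableEquiv.measurableEmbedding _)]
  have : (fun z : EuclideanSpace ℝ (Fin n) => ‖z‖ ^ 2 * stdGaussPdf n z) ∘ ⇑(e).symm
      = fun y : Fin n → ℝ => ∑ i, ∏ j, fam n i j (y j) :=
    funext fun y => pdf_sq_transfer n y
  rw [this]
  exact integrable_finset_sum _ (fun i _ =>
    Integrable.fintype_prod (f := fam n i) (fun j => fam_integrable n i j))

lemma integral_normsq_pdf :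
    ∫ z : EuclideanSpace ℝ (Fin n), ‖z‖ ^ 2 * stdGaussPdf n z = n := by
  rw [← (mp_symm n).integral_comp (MeasurableEquiv.measurableEmbedding _)
    (fun z : EuclideanSpace ℝ (Fin n) => ‖z‖ ^ 2 * stdGaussPdf n z)]
  simp_rw [pdf_sq_transfer n]
  rw [integral_finset_sum (μ := volume) _ (fun i _ =>
    Integrable.fintype_prod (f := fam n i) (fun j => fam_integrable n i j))]
  simp_rw [MeasureTheory.integral_fintype_prod_volume_eq_prod (f := fun j => fam n _ j), fam_integral,
    Finset.prod_const_one]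
  simp

end transfer

set_option synthInstance.maxHeartbeats 1000000 in
set_option maxHeartbeats 2000000 in
/-- If `f` is continuously differentiable with `L₁`-Lipschitz gradient, then the gradient of
its Gaussian smoothing `f_η(x) = E[f(x + ηZ)]` (`Z ~ 𝒩(0, I)`) satisfies
`‖∇f_η(x) - ∇f(x)‖ ≤ L₁ η √n`. -/
theorem gaussian_smoothing_gradient_approx (n : ℕ)
    (f : EuclideanSpace ℝ (Fin n) → ℝ) (L₁ η : ℝ) (hη : 0 < η)
    (hdiff : ContDiff ℝ 1 f)
    (hgrad : ∀ x y : EuclideanSpace ℝ (Fin n),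
      ‖gradient f x - gradient f y‖ ≤ L₁ * ‖x - y‖) :
    ∀ x : EuclideanSpace ℝ (Fin n),
      ‖gradient (fun u => ∫ z, f (u + η • z) * stdGaussPdf n z) x - gradient f x‖ ≤
        L₁ * η * Real.sqrt n := by
  intro x
  rcases Nat.eq_zero_or_pos n with hn | hn
  · subst hn
    have : gradient (fun u => ∫ z, f (u + η • z) * stdGaussPdf 0 z) x = gradient f x :=
      Subsingleton.elim _ _
    rw [this, sub_self, norm_zero]
    simp
  -- main case
  set g := stdGaussPdf n with hg_def
  have hfc : Continuous f := hdiff.continuous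
  have hg0 : ∀ z, 0 ≤ g z := stdGaussPdf_nonneg n
  have hgc : Continuous g := stdGaussPdf_continuous n
  have ig : Integrable g := integrable_stdGaussPdf n
  have ig2 : Integrable (fun z : EuclideanSpace ℝ (Fin n) => ‖z‖ ^ 2 * g z) := integrable_normsq_pdf n
  have hL : 0 ≤ L₁ := by
    have h1 := hgrad (EuclideanSpace.single ⟨0, hn⟩ (1:ℝ)) 0
    rw [sub_zero, EuclideanSpace.norm_single] at h1
    simpa using le_trans (norm_nonneg _) h1
  -- norm of z times g is integrable
  have ig1 : Integrable (fun z : EuclideanSpace ℝ (Fin n) => ‖z‖ * g z) := by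
    refine Integrable.mono' (g := fun z : EuclideanSpace ℝ (Fin n) => (1 + ‖z‖ ^ 2) * g z) ?_ ?_ ?_
    · exact (ig.add ig2).congr (by filter_upwards with z; simp only [Pi.add_apply]; ring)
    · exact (continuous_norm.mul hgc).aestronglyMeasurable
    · filter_upwards with z
      rw [Real.norm_eq_abs, abs_of_nonneg (mul_nonneg (norm_nonneg _) (hg0 z))]
      have : ‖z‖ ≤ 1 + ‖z‖ ^ 2 := by nlinarith [norm_nonneg z]
      exact mul_le_mul_of_nonneg_right this (hg0 z)
  have hfdiff : Differentiable ℝ f := hdiff.differentiable one_ne_zero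
  have hfderiv_cont : Continuous (fderiv ℝ f) := hdiff.continuous_fderiv one_ne_zero
  have hgrad_eq : ∀ u : EuclideanSpace ℝ (Fin n), gradient f u = (InnerProductSpace.toDual ℝ (EuclideanSpace ℝ (Fin n))).symm (fderiv ℝ f u) :=
    fun u => rfl
  have hnorm_fd : ∀ u : EuclideanSpace ℝ (Fin n), ‖fderiv ℝ f u‖ = ‖gradient f u‖ := fun u => by
    rw [hgrad_eq]; exact (LinearIsometryEquiv.norm_map _ _).symm
  set C := ‖gradient f x‖ with hC
  have hgb : ∀ u : EuclideanSpace ℝ (Fin n), ‖gradient f u‖ ≤ C + L₁ * ‖u - x‖ := fun u => by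
    have h1 := hgrad u x
    have h2 : ‖gradient f u‖ ≤ ‖gradient f u - gradient f x‖ + ‖gradient f x‖ := by
      have := norm_add_le (gradient f u - gradient f x) (gradient f x)
      simpa using this
    calc ‖gradient f u‖ ≤ ‖gradient f u - gradient f x‖ + C := h2
      _ ≤ L₁ * ‖u - x‖ + C := by linarith
      _ = C + L₁ * ‖u - x‖ := by ring
  -- derivative under the integral
  set F' : EuclideanSpace ℝ (Fin n) → EuclideanSpace ℝ (Fin n) → (EuclideanSpace ℝ (Fin n) →L[ℝ] ℝ) := fun (u z : EuclideanSpace ℝ (Fin n)) => g z • fderiv ℝ f (u + η • z) with hF'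
  have key : HasFDerivAt (fun u => ∫ z, f (u + η • z) * g z) (∫ z, F' x z) x := by
    apply hasFDerivAt_integral_of_dominated_of_fderiv_le
      (bound := fun z : EuclideanSpace ℝ (Fin n) => (C + L₁ * (1 + η * ‖z‖)) * g z) (s := Metric.ball x 1) (Metric.ball_mem_nhds x one_pos)
    · filter_upwards with u
      exact Continuous.aestronglyMeasurable (by fun_prop)
    · -- Integrable (F x)
      refine Integrable.mono'
        (g := fun z : EuclideanSpace ℝ (Fin n) => (|f x| + (C + L₁ * (η * ‖z‖)) * (η * ‖z‖)) * g z) ?_ ?_ ?_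
      · refine (((ig.const_mul (|f x|)).add ((ig1.const_mul (C * η)).add
          (ig2.const_mul (L₁ * η ^ 2)))).congr ?_)
        filter_upwards with z
        simp only [Pi.add_apply]
        ring
      · exact Continuous.aestronglyMeasurable (by fun_prop)
      · filter_upwards with z
        rw [Real.norm_eq_abs, abs_mul, abs_of_nonneg (hg0 z)]
        refine mul_le_mul_of_nonneg_right ?_ (hg0 z)
        have hmv : ‖f (x + η • z) - f x‖ ≤ (C + L₁ * (η * ‖z‖)) * ‖(x + η • z) - x‖ := by
          refine Convex.norm_image_sub_le_of_norm_fderiv_le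
            (fun u _ => hfdiff u) (fun u hu => ?_)
            (convex_closedBall x (η * ‖z‖)) (Metric.mem_closedBall_self (by positivity)) ?_
          · rw [hnorm_fd]
            refine le_trans (hgb u) ?_
            have : ‖u - x‖ ≤ η * ‖z‖ := by
              rw [← dist_eq_norm]; exact Metric.mem_closedBall.mp hu
            nlinarith
          · rw [Metric.mem_closedBall, dist_eq_norm, add_sub_cancel_left, norm_smul,
              Real.norm_eq_abs, abs_of_pos hη]
        simp only [add_sub_cancel_left, norm_smul, Real.norm_eq_abs, abs_of_pos hη] at hmv
        have h3 : |f (x + η • z)| ≤ |f x| + |f (x + η • z) - f x| := by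
          have := abs_add_le (f x) (f (x + η • z) - f x)
          simpa using this
        linarith
    · -- AESM F' x
      exact (hgc.smul (hfderiv_cont.comp (continuous_const.add
        (continuous_id.const_smul η)))).aestronglyMeasurable
    · -- bound
      filter_upwards with z u hu
      simp only [hF']
      rw [norm_smul (g z) (fderiv ℝ f (u + η • z)), Real.norm_eq_abs, abs_of_nonneg (hg0 z), mul_comm]
      refine mul_le_mul_of_nonneg_right ?_ (hg0 z)
      rw [hnorm_fd]
      refine le_trans (hgb _) ?_
      have h1 : ‖u + η • z - x‖ ≤ ‖u - x‖ + η * ‖z‖ := by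
        calc ‖u + η • z - x‖ = ‖(u - x) + η • z‖ := by rw [add_sub_right_comm]
          _ ≤ ‖u - x‖ + ‖η • z‖ := norm_add_le _ _
          _ = ‖u - x‖ + η * ‖z‖ := by
              rw [norm_smul η z, Real.norm_eq_abs, abs_of_pos hη]
      have h2 : ‖u - x‖ ≤ 1 := le_of_lt (by simpa [dist_eq_norm] using hu)
      nlinarith
    · -- bound integrable
      refine ((ig.const_mul (C + L₁)).add (ig1.const_mul (L₁ * η))).congr ?_
      filter_upwards with z
      simp only [Pi.add_apply]
      ring
    · -- differentiability
      filter_upwards with z u _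
      have h1 : HasFDerivAt (fun u : EuclideanSpace ℝ (Fin n) => u + η • z) (ContinuousLinearMap.id ℝ (EuclideanSpace ℝ (Fin n))) u :=
        (hasFDerivAt_id u).add_const _
      have h2 : HasFDerivAt (fun u : EuclideanSpace ℝ (Fin n) => f (u + η • z)) (fderiv ℝ f (u + η • z)) u := by
        have := ((hfdiff (u + η • z)).hasFDerivAt).comp u h1
        rw [ContinuousLinearMap.comp_id] at this
        exact this
      exact h2.mul_const (g z)
  -- gradient continuity
  have hgradc : Continuous (gradient f) := by
    have h : gradient f = fun u =>
        (InnerProductSpace.toDual ℝ (EuclideanSpace ℝ (Fin n))).symm (fderiv ℝ f u) := rfl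
    rw [h]
    exact (LinearIsometryEquiv.continuous _).comp hfderiv_cont
  -- integrability of the gradient integrand
  have iF' : Integrable (fun z : EuclideanSpace ℝ (Fin n) => g z • gradient f (x + η • z)) := by
    refine Integrable.mono'
      (g := fun z : EuclideanSpace ℝ (Fin n) => (C + L₁ * (η * ‖z‖)) * g z) ?_ ?_ ?_
    · refine ((ig.const_mul C).add (ig1.const_mul (L₁ * η))).congr ?_
      filter_upwards with z
      simp only [Pi.add_apply]
      ring
    · exact (hgc.smul (hgradc.comp (continuous_const.add
        (continuous_id.const_smul η)))).aestronglyMeasurable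
    · filter_upwards with z
      rw [norm_smul (g z) (gradient f (x + η • z)), Real.norm_eq_abs, abs_of_nonneg (hg0 z),
        mul_comm]
      refine mul_le_mul_of_nonneg_right ?_ (hg0 z)
      refine le_trans (hgb _) ?_
      rw [add_sub_cancel_left, norm_smul η z, Real.norm_eq_abs, abs_of_pos hη]
  set G := ∫ z, g z • gradient f (x + η • z) with hG
  have htd : (InnerProductSpace.toDual ℝ (EuclideanSpace ℝ (Fin n))) G = ∫ z, F' x z := by
    rw [hG]
    rw [show ((InnerProductSpace.toDual ℝ (EuclideanSpace ℝ (Fin n)))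
        (∫ z, g z • gradient f (x + η • z)) : EuclideanSpace ℝ (Fin n) →L[ℝ] ℝ)
      = (InnerProductSpace.toDual ℝ
          (EuclideanSpace ℝ (Fin n))).toContinuousLinearEquiv
        (∫ z, g z • gradient f (x + η • z)) from rfl]
    rw [← ContinuousLinearEquiv.integral_comp_comm]
    congr 1
    funext z
    simp only [hF']
    rw [show ((InnerProductSpace.toDual ℝ
        (EuclideanSpace ℝ (Fin n))).toContinuousLinearEquiv
        (g z • gradient f (x + η • z)) : EuclideanSpace ℝ (Fin n) →L[ℝ] ℝ)
      = (InnerProductSpace.toDual ℝ (EuclideanSpace ℝ (Fin n)))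
        (g z • gradient f (x + η • z)) from rfl]
    rw [_root_.map_smul]
    congr 1
    rw [hgrad_eq]
    exact LinearIsometryEquiv.apply_symm_apply _ _
  have hkey2 : HasGradientAt (fun u => ∫ z, f (u + η • z) * g z) G x := by
    rw [← htd] at key
    exact hasGradientAt_iff_hasFDerivAt.mpr key
  have hgr : gradient (fun u => ∫ z, f (u + η • z) * g z) x = G := hkey2.gradient
  rw [hg_def] at hgr
  rw [hgr]
  -- rewrite the difference as a single integral
  have i2 : Integrable (fun z : EuclideanSpace ℝ (Fin n) => g z • gradient f x) :=
    ig.smul_const _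
  have e1 : ∫ z, g z • gradient f x = gradient f x := by
    rw [integral_smul_const, hg_def, integral_stdGaussPdf n, one_smul]
  have hsub : G - gradient f x = ∫ z, g z • (gradient f (x + η • z) - gradient f x) := by
    calc G - gradient f x
        = (∫ z, g z • gradient f (x + η • z)) - ∫ z, g z • gradient f x := by rw [e1, hG]
      _ = ∫ z, (g z • gradient f (x + η • z) - g z • gradient f x) := (integral_sub iF' i2).symm
      _ = ∫ z, g z • (gradient f (x + η • z) - gradient f x) := by
          congr 1
          funext z
          rw [smul_sub]
  rw [hsub]
  -- final bound
  have hsn : 0 < Real.sqrt n := Real.sqrt_pos.mpr (by exact_mod_cast hn)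
  have hint : ∫ z : EuclideanSpace ℝ (Fin n), ‖z‖ * g z ≤ Real.sqrt n := by
    set s := Real.sqrt n with hs
    have hss : s * s = (n : ℝ) := Real.mul_self_sqrt (by positivity)
    have irhs : Integrable (fun z : EuclideanSpace ℝ (Fin n) =>
        (s/2) * g z + (2*s)⁻¹ * (‖z‖^2 * g z)) := (ig.const_mul _).add (ig2.const_mul _)
    have hpt : ∀ z : EuclideanSpace ℝ (Fin n),
        ‖z‖ * g z ≤ (s/2) * g z + (2*s)⁻¹ * (‖z‖^2 * g z) := by
      intro z
      have h1 : ‖z‖ ≤ s/2 + (2*s)⁻¹ * ‖z‖^2 := by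
        have h2s : (0:ℝ) < 2*s := by positivity
        rw [← mul_le_mul_iff_right₀ h2s]
        have hr : 2*s*(s/2 + (2*s)⁻¹*‖z‖^2) = s*s + ‖z‖^2 := by
          field_simp
        rw [hr]
        nlinarith [sq_nonneg (‖z‖ - s)]
      calc ‖z‖ * g z ≤ (s/2 + (2*s)⁻¹ * ‖z‖^2) * g z :=
            mul_le_mul_of_nonneg_right h1 (hg0 z)
        _ = (s/2) * g z + (2*s)⁻¹ * (‖z‖^2 * g z) := by ring
    have hmono := integral_mono ig1 irhs hpt
    rw [integral_add (ig.const_mul _) (ig2.const_mul _), integral_const_mul, integral_const_mul,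
      hg_def, integral_stdGaussPdf n, integral_normsq_pdf n] at hmono
    have heq : s/2 * 1 + (2*s)⁻¹ * (n:ℝ) = s := by
      rw [← hss]
      field_simp
      ring
    linarith
  refine le_trans (norm_integral_le_of_norm_le (ig1.const_mul (L₁ * η)) ?_) ?_
  · filter_upwards with z
    rw [norm_smul (g z) (gradient f (x + η • z) - gradient f x), Real.norm_eq_abs,
      abs_of_nonneg (hg0 z)]
    have hgd := hgrad (x + η • z) x
    rw [add_sub_cancel_left, norm_smul η z, Real.norm_eq_abs, abs_of_pos hη] at hgd
    calc g z * ‖gradient f (x + η • z) - gradient f x‖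
        ≤ g z * (L₁ * (η * ‖z‖)) := mul_le_mul_of_nonneg_left hgd (hg0 z)
      _ = L₁ * η * (‖z‖ * g z) := by ring
  · rw [integral_const_mul]
    exact mul_le_mul_of_nonneg_left hint (by positivity)
end

section
/- Let ℙ and ℚ be probability measures on a common measurable space with densities p and q, and suppose ℚ ≪ ℙ. Then d₂²(ℚ, ℙ) + d₂²(ℙ, ℚ) ≤ 2 D_KL(ℚ ‖ ℙ), where d₂²(ℚ, ℙ) = ∫ (p(u) - q(u))₊² / p(u) du and D_KL(ℚ ‖ ℙ) = ∫ q(u) log(q(u)/p(u)) du. -/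
open MeasureTheory


lemma my_aux_antitone (f f' : ℝ → ℝ) (hc : ContinuousOn f (Set.Ioc 0 1))
    (hd : ∀ x ∈ Set.Ioo (0:ℝ) 1, HasDerivAt f (f' x) x)
    (hle : ∀ x ∈ Set.Ioo (0:ℝ) 1, f' x ≤ 0) :
    ∀ x ∈ Set.Ioc (0:ℝ) 1, f 1 ≤ f x := by
  have hanti : AntitoneOn f (Set.Ioc 0 1) := by
    apply antitoneOn_of_deriv_nonpos (convex_Ioc 0 1) hc
    · intro x hx
      rw [interior_Ioc] at hx
      exact (hd x hx).differentiableAt.differentiableWithinAt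
    · intro x hx
      rw [interior_Ioc] at hx
      rw [(hd x hx).deriv]
      exact hle x hx
  intro x hx
  exact hanti hx (Set.right_mem_Ioc.2 one_pos) hx.2

lemma my_hlog : ContinuousOn Real.log (Set.Ioc (0:ℝ) 1) :=
  Real.continuousOn_log.mono (fun x hx => ne_of_gt hx.1)

lemma my_lemA : ∀ t : ℝ, 0 ≤ t → t ≤ 1 → (1 - t)^2 ≤ 2*(t*Real.log t - t + 1) := by
  intro t ht0 ht1
  rcases eq_or_lt_of_le ht0 with h | h
  · simp [← h]
  · have key := my_aux_antitone (fun s => 2*(s*Real.log s - s + 1) - (1-s)^2)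
      (fun s => 2*Real.log s + 2 - 2*s)
      (by
        apply ContinuousOn.sub
        · exact continuousOn_const.mul ((continuousOn_id.mul my_hlog).sub continuousOn_id |>.add
            continuousOn_const)
        · fun_prop)
      (by
        intro x hx
        have hx0 : x ≠ 0 := ne_of_gt hx.1
        have h1 : HasDerivAt (fun s : ℝ => s * Real.log s) (Real.log x + 1) x := by
          have := (hasDerivAt_id' (x := x)).mul (Real.hasDerivAt_log hx0)
          have e : 1 * Real.log x + x * x⁻¹ = Real.log x + 1 := by rw [one_mul, mul_inv_cancel₀ hx0]
          rw [e] at this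
          exact this
        have h2 : HasDerivAt (fun s : ℝ => 2*(s*Real.log s - s + 1) - (1-s)^2)
            (2*(Real.log x + 1 - 1) - (2*(1-x)^1*(-1))) x := by
          exact (((h1.sub (hasDerivAt_id' (x := x))).add_const 1).const_mul 2).sub
            (((hasDerivAt_id' (x := x)).const_sub 1).pow 2)
        convert h2 using 1
        ring)
      (by
        intro x hx
        have := Real.log_le_sub_one_of_pos hx.1
        show 2*Real.log x + 2 - 2*x ≤ 0
        linarith)
      t ⟨h, ht1⟩
    simp only [Real.log_one] at key
    nlinarith [key]

lemma my_lemB : ∀ s : ℝ, 0 < s → s ≤ 1 → (1 - s)^2 ≤ 2*(s - 1 - Real.log s) := by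
  intro t ht0 ht1
  have key := my_aux_antitone (fun s => 2*(s - 1 - Real.log s) - (1-s)^2)
      (fun s => 2 - 2/s + 2*(1-s))
      (by
        apply ContinuousOn.sub
        · exact continuousOn_const.mul ((continuousOn_id.sub continuousOn_const).sub my_hlog)
        · fun_prop)
      (by
        intro x hx
        have hx0 : x ≠ 0 := ne_of_gt hx.1
        have h2 : HasDerivAt (fun s : ℝ => 2*(s - 1 - Real.log s) - (1-s)^2)
            (2*(1 - x⁻¹) - (2*(1-x)^1*(-1))) x := by
          exact ((((hasDerivAt_id' (x := x)).sub_const 1).sub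
            (Real.hasDerivAt_log hx0)).const_mul 2).sub
            (((hasDerivAt_id' (x := x)).const_sub 1).pow 2)
        convert h2 using 1
        field_simp
        ring)
      (by
        intro x hx
        have hx0 : 0 < x := hx.1
        show 2 - 2/x + 2*(1-x) ≤ 0
        rw [show (2:ℝ) - 2/x + 2*(1-x) = (4*x - 2*x^2 - 2)/x by field_simp; ring]
        apply div_nonpos_of_nonpos_of_nonneg _ hx0.le
        nlinarith [sq_nonneg (1 - x)])
      t ⟨ht0, ht1⟩
  simp only [Real.log_one] at key
  nlinarith [key]

lemma my_key (p q : ℝ) (hp0 : 0 ≤ p) (hq0 : 0 ≤ q) (habs : p = 0 → q = 0) :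
    max (p - q) 0 ^ 2 / p + max (q - p) 0 ^ 2 / q ≤
      2 * (q * Real.log (q / p) + p - q) := by
  rcases eq_or_lt_of_le hp0 with hp | hp
  · have hq : q = 0 := habs hp.symm
    simp [← hp, hq]
  · rcases le_or_gt q p with hqp | hpq
    · -- q ≤ p : second term vanishes
      have h2 : max (q - p) 0 = 0 := max_eq_right (by linarith)
      have hA := my_lemA (q / p) (div_nonneg hq0 hp.le) ((div_le_one hp).2 hqp)
      have hA' := mul_le_mul_of_nonneg_right hA hp.le
      have e1 : (1 - q / p)^2 * p = (p - q)^2 / p := by field_simp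
      have e2 : 2*((q/p)*Real.log (q/p) - q/p + 1) * p
          = 2*(q * Real.log (q/p) + p - q) := by field_simp; ring
      rw [e1, e2] at hA'
      have h1 : max (p - q) 0 = p - q := max_eq_left (by linarith)
      rw [h1, h2]
      simpa using hA'
    · -- p < q : first term vanishes
      have hq : 0 < q := lt_of_le_of_lt hp0 hpq
      have h1 : max (p - q) 0 = 0 := max_eq_right (by linarith)
      have hB := my_lemB (p / q) (div_pos hp hq) ((div_le_one hq).2 hpq.le)
      have hB' := mul_le_mul_of_nonneg_right hB hq.le
      have e1 : (1 - p / q)^2 * q = (q - p)^2 / q := by field_simp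
      have hlg : Real.log (p / q) = - Real.log (q / p) := by
        rw [Real.log_div (ne_of_gt hp) (ne_of_gt hq), Real.log_div (ne_of_gt hq) (ne_of_gt hp)]
        ring
      have e2 : 2*(p/q - 1 - Real.log (p/q)) * q
          = 2*(q * Real.log (q/p) + p - q) := by
        rw [hlg]; field_simp; ring
      rw [e1, e2] at hB'
      have h2 : max (q - p) 0 = q - p := max_eq_left (by linarith)
      rw [h1, h2]
      simpa using hB'
/-- Lemma 8.4 of Boucheron–Lugosi–Massart: for probability densities `p` (of `ℙ`) and
`q` (of `ℚ`) with `ℚ ≪ ℙ`,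
`d₂²(ℚ, ℙ) + d₂²(ℙ, ℚ) ≤ 2 D_KL(ℚ ‖ ℙ)`, where
`d₂²(ℚ, ℙ) = ∫ (p - q)₊² / p` and `D_KL(ℚ ‖ ℙ) = ∫ q log (q / p)`. -/
theorem chi2_sym_le_two_KL {α : Type*} [MeasurableSpace α] (μ : Measure α)
    (p q : α → ℝ) (hp : Measurable p) (hq : Measurable q)
    (hp0 : ∀ u, 0 ≤ p u) (hq0 : ∀ u, 0 ≤ q u)
    (hpone : ∫ u, p u ∂μ = 1) (hqone : ∫ u, q u ∂μ = 1)
    (habs : ∀ u, p u = 0 → q u = 0)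
    (hKL : Integrable (fun u => q u * Real.log (q u / p u)) μ) :
    (∫ u, max (p u - q u) 0 ^ 2 / p u ∂μ) + (∫ u, max (q u - p u) 0 ^ 2 / q u ∂μ) ≤
      2 * ∫ u, q u * Real.log (q u / p u) ∂μ := by
  -- integrability of p and q
  have hip : Integrable p μ := by
    by_contra h
    rw [integral_undef h] at hpone
    norm_num at hpone
  have hiq : Integrable q μ := by
    by_contra h
    rw [integral_undef h] at hqone
    norm_num at hqone
  set F1 : α → ℝ := fun u => max (p u - q u) 0 ^ 2 / p u with hF1
  set F2 : α → ℝ := fun u => max (q u - p u) 0 ^ 2 / q u with hF2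
  set G : α → ℝ := fun u => 2 * (q u * Real.log (q u / p u) + p u - q u) with hG
  have hiG : Integrable G μ := (((hKL.add hip).sub hiq).const_mul 2)
  have hF1nn : ∀ u, 0 ≤ F1 u := fun u =>
    div_nonneg (pow_nonneg (le_max_right _ _) 2) (hp0 u)
  have hF2nn : ∀ u, 0 ≤ F2 u := fun u =>
    div_nonneg (pow_nonneg (le_max_right _ _) 2) (hq0 u)
  have hkey : ∀ u, F1 u + F2 u ≤ G u := fun u =>
    my_key (p u) (q u) (hp0 u) (hq0 u) (habs u)
  have hmF1 : Measurable F1 := (((hp.sub hq).max measurable_const).pow_const 2).div hp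
  have hmF2 : Measurable F2 := (((hq.sub hp).max measurable_const).pow_const 2).div hq
  have hiF1 : Integrable F1 μ := by
    refine hiG.mono' hmF1.aestronglyMeasurable (Filter.Eventually.of_forall fun u => ?_)
    rw [Real.norm_eq_abs, abs_of_nonneg (hF1nn u)]
    have := hkey u
    have := hF2nn u
    linarith
  have hiF2 : Integrable F2 μ := by
    refine hiG.mono' hmF2.aestronglyMeasurable (Filter.Eventually.of_forall fun u => ?_)
    rw [Real.norm_eq_abs, abs_of_nonneg (hF2nn u)]
    have := hkey u
    have := hF1nn u
    linarith
  have hsum : (∫ u, F1 u ∂μ) + (∫ u, F2 u ∂μ) = ∫ u, F1 u + F2 u ∂μ :=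
    (integral_add hiF1 hiF2).symm
  have hle : ∫ u, F1 u + F2 u ∂μ ≤ ∫ u, G u ∂μ :=
    integral_mono (hiF1.add hiF2) hiG hkey
  have hGval : ∫ u, G u ∂μ = 2 * ∫ u, q u * Real.log (q u / p u) ∂μ := by
    rw [hG]
    simp only []
    rw [MeasureTheory.integral_const_mul]
    have h1 : Integrable (fun u => q u * Real.log (q u / p u) + p u) μ := hKL.add hip
    rw [integral_sub h1 hiq, integral_add hKL hip, hpone, hqone]
    ring
  calc (∫ u, F1 u ∂μ) + (∫ u, F2 u ∂μ) = ∫ u, F1 u + F2 u ∂μ := hsum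
    _ ≤ ∫ u, G u ∂μ := hle
    _ = 2 * ∫ u, q u * Real.log (q u / p u) ∂μ := hGval
end
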